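/- Let the buyer's item value v have CDF F with F(v) = 0 for v < 2, F(v) = 1 − 1/(v−1) for 2 ≤ v < 5, and F(v) = 1 for v ≥ 5 (so there is an atom of mass 1/4 at v = 5), and independently let the outside-option value c equal 0 with probability 0.15 and 2 with probability 0.85. Then: (a) every posted-price mechanism earns expected revenue at most 13/15; and (b) the menu mechanism offering the buyer the choice among not participating (keeping the outside option), buying the item at price 3, and receiving the item with probability 2/3 at price 4/3 — the buyer choosing a utility-maximizing option, with ties broken in favor of the seller — earns expected revenue 9/10. Consequently, offering lotteries strictly improves on every posted price, and the multiplicative gap between the optimal mechanism and optimal pricing is at least 27/26 > 1.038. -/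

import Mathlib

open MeasureTheory

/-- The item-value distribution: CDF `F(v) = 1 − 1/(v−1)` on `[2,5)` (density
`1/(v−1)²` there) together with an atom of mass `1/4` at `v = 5`. -/
noncomputable def itemMeasure : Measure ℝ :=
  volume.withDensity
      (fun v => ENNReal.ofReal (if v ∈ Set.Ico (2:ℝ) 5 then ((v - 1) ^ 2)⁻¹ else 0))
    + (ENNReal.ofReal (1 / 4)) • Measure.dirac 5

/-- The outside-option distribution: `0` with probability `0.15` and `2` with
probability `0.85`. -/
noncomputable def outsideMeasure : Measure ℝ :=
  (ENNReal.ofReal 0.15) • Measure.dirac 0 + (ENNReal.ofReal 0.85) • Measure.dirac 2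

/-- The joint type distribution: item value and outside option independent. -/
noncomputable def jointMeasure : Measure (ℝ × ℝ) := itemMeasure.prod outsideMeasure

/-- The payment made by a buyer of type `(v, c)` facing the menu
`{opt out, buy at price 3, lottery (2/3, 4/3)}`, choosing a utility-maximizing option
with ties broken in favor of the seller. -/
noncomputable def menuPay (t : ℝ × ℝ) : ℝ :=
  if (2 / 3) * t.1 - 4 / 3 ≤ t.1 - 3 ∧ t.2 ≤ t.1 - 3 then 3
  else if t.2 ≤ (2 / 3) * t.1 - 4 / 3 then 4 / 3
  else 0

lemma intInt (a : ℝ) (ha : 2 ≤ a) (ha5 : a ≤ 5) :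
    ∫ v in a..5, ((v - 1) ^ 2)⁻¹ = 1/(a-1) - 1/4 := by
  have h : ∀ x ∈ Set.uIcc a 5, HasDerivAt (fun v : ℝ => -(v-1)⁻¹) (((x - 1) ^ 2)⁻¹) x := by
    intro x hx
    rw [Set.uIcc_of_le ha5] at hx
    have hx1 : x - 1 ≠ 0 := by have := hx.1; intro h; nlinarith [hx.1]
    have : HasDerivAt (fun v : ℝ => v - 1) 1 x := (hasDerivAt_id x).sub_const 1
    have h2 := this.inv hx1
    have h3 : HasDerivAt (fun v : ℝ => -(v-1)⁻¹) _ x := h2.neg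
    convert h3 using 1
    ring
  have hint : IntervalIntegrable (fun v : ℝ => ((v - 1) ^ 2)⁻¹) volume a 5 := by
    apply ContinuousOn.intervalIntegrable
    apply ContinuousOn.inv₀
    · fun_prop
    · intro x hx
      rw [Set.uIcc_of_le ha5] at hx
      have := hx.1; nlinarith
  rw [intervalIntegral.integral_eq_sub_of_hasDerivAt h hint]
  have ha1 : a - 1 ≠ 0 := by intro h; nlinarith
  field_simp
  ring

lemma lintIco (a : ℝ) (ha : 2 ≤ a) (ha5 : a ≤ 5) :
    ∫⁻ v in Set.Ico a 5, ENNReal.ofReal (((v - 1) ^ 2)⁻¹) = ENNReal.ofReal (1/(a-1) - 1/4) := by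
  rw [Measure.restrict_congr_set Ico_ae_eq_Ioc]
  rw [← MeasureTheory.ofReal_integral_eq_lintegral_ofReal]
  · rw [← intervalIntegral.integral_of_le ha5, intInt a ha ha5]
  · apply ((ContinuousOn.integrableOn_compact (isCompact_Icc (a := a) (b := 5))) ?_).mono_set
      Set.Ioc_subset_Icc_self
    apply ContinuousOn.inv₀
    · fun_prop
    · intro x hx
      have := hx.1; nlinarith
  · filter_upwards with x
    positivity

lemma item_Ici (x : ℝ) : itemMeasure (Set.Ici x)
    = ENNReal.ofReal (if x ≤ 2 then 1 else if x ≤ 5 then 1/(x-1) else 0) := by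
  rw [itemMeasure, Measure.add_apply, Measure.smul_apply, Measure.dirac_apply,
    withDensity_apply _ measurableSet_Ici]
  have hfun : (fun v : ℝ => ENNReal.ofReal (if v ∈ Set.Ico (2:ℝ) 5 then ((v - 1) ^ 2)⁻¹ else 0))
      = (Set.Ico (2:ℝ) 5).indicator (fun v => ENNReal.ofReal (((v - 1) ^ 2)⁻¹)) := by
    ext v
    by_cases h : v ∈ Set.Ico (2:ℝ) 5 <;> simp [h, Set.indicator_of_mem, Set.indicator_of_notMem]
  rw [hfun]
  rw [show lintegral (volume.restrict (Set.Ici x)) ((Set.Ico (2:ℝ) 5).indicator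
      fun v => ENNReal.ofReal (((v - 1) ^ 2)⁻¹))
    = ∫⁻ v in Set.Ici x, (Set.Ico (2:ℝ) 5).indicator
      (fun v => ENNReal.ofReal (((v - 1) ^ 2)⁻¹)) v from rfl]
  rw [lintegral_indicator measurableSet_Ico, Measure.restrict_restrict measurableSet_Ico]
  have hset : Set.Ico (2:ℝ) 5 ∩ Set.Ici x = Set.Ico (max x 2) 5 := by
    ext v; simp [Set.mem_Ico, max_le_iff, and_assoc, and_comm]
  rw [hset]
  rcases le_or_gt x 2 with h2 | h2
  · rw [max_eq_right h2, lintIco 2 le_rfl (by norm_num)]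
    rw [if_pos h2]
    simp [Set.indicator_of_mem, Set.mem_Ici.mpr (by linarith : x ≤ (5:ℝ))]
    rw [show (4:ENNReal)⁻¹ = ENNReal.ofReal 4⁻¹ by simp]
    rw [← ENNReal.ofReal_add (by norm_num) (by norm_num)]
    norm_num
  · rw [max_eq_left h2.le, if_neg (not_le.mpr h2)]
    rcases le_or_gt x 5 with h5 | h5
    · rw [lintIco x (by linarith) h5, if_pos h5]
      simp only [Set.indicator_of_mem (Set.mem_Ici.mpr h5), Pi.one_apply, smul_eq_mul, mul_one]
      rw [← ENNReal.ofReal_add ?_ (by norm_num)]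
      · norm_num
      · have hx1 : (0:ℝ) < x - 1 := by linarith
        have : 1/4 ≤ 1/(x-1) := by
          rw [div_le_div_iff₀ (by norm_num) hx1]; linarith
        linarith
    · rw [Set.Ico_eq_empty (by simp; linarith), if_neg (not_le.mpr h5)]
      simp [Set.indicator_of_notMem, Set.mem_Ici, not_le.mpr h5]

lemma outside_Iic (y : ℝ) : outsideMeasure (Set.Iic y)
    = ENNReal.ofReal 0.15 * (Set.Ici (0:ℝ)).indicator 1 y
      + ENNReal.ofReal 0.85 * (Set.Ici (2:ℝ)).indicator 1 y := by
  rw [outsideMeasure, Measure.add_apply, Measure.smul_apply, Measure.smul_apply,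
    Measure.dirac_apply, Measure.dirac_apply]
  rcases le_or_gt 2 y with h2 | h2
  · have h0 : (0:ℝ) ≤ y := by linarith
    simp [Set.indicator_apply, Set.mem_Iic, Set.mem_Ici, h0, h2, smul_eq_mul]
  · rcases le_or_gt 0 y with h0 | h0
    · simp [Set.indicator_apply, Set.mem_Iic, Set.mem_Ici, h0, not_le.mpr h2, smul_eq_mul]
    · simp [Set.indicator_apply, Set.mem_Iic, Set.mem_Ici, not_le.mpr h0, not_le.mpr h2,
        smul_eq_mul]

instance : SFinite outsideMeasure := by rw [outsideMeasure]; infer_instance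

lemma joint_set (p : ℝ) : jointMeasure {t : ℝ × ℝ | t.2 ≤ t.1 - p}
    = ENNReal.ofReal 0.15 * itemMeasure (Set.Ici p)
      + ENNReal.ofReal 0.85 * itemMeasure (Set.Ici (p + 2)) := by
  have hms : MeasurableSet {t : ℝ × ℝ | t.2 ≤ t.1 - p} :=
    measurableSet_le (by fun_prop) (by fun_prop)
  rw [jointMeasure, Measure.prod_apply hms]
  have hpre : ∀ v : ℝ, (Prod.mk v ⁻¹' {t : ℝ × ℝ | t.2 ≤ t.1 - p}) = Set.Iic (v - p) := by
    intro v; rfl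
  calc ∫⁻ v, outsideMeasure (Prod.mk v ⁻¹' {t : ℝ × ℝ | t.2 ≤ t.1 - p}) ∂itemMeasure
      = ∫⁻ v, (ENNReal.ofReal 0.15 * (Set.Ici p).indicator 1 v
          + ENNReal.ofReal 0.85 * (Set.Ici (p + 2)).indicator 1 v) ∂itemMeasure := by
        apply lintegral_congr
        intro v
        rw [hpre v, outside_Iic]
        congr 2
        · by_cases h : p ≤ v
          · rw [Set.indicator_of_mem (by simpa [Set.mem_Ici] using sub_nonneg.mpr h),
              Set.indicator_of_mem (Set.mem_Ici.mpr h)]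
            rfl
          · rw [Set.indicator_of_notMem (by simp only [Set.mem_Ici]; intro hc; exact h (by linarith)),
              Set.indicator_of_notMem (by simpa [Set.mem_Ici] using h)]
        · by_cases h : p + 2 ≤ v
          · rw [Set.indicator_of_mem (by simp only [Set.mem_Ici]; linarith),
              Set.indicator_of_mem (Set.mem_Ici.mpr h)]
            rfl
          · rw [Set.indicator_of_notMem (by simp only [Set.mem_Ici]; intro hc; exact h (by linarith)),
              Set.indicator_of_notMem (by simpa [Set.mem_Ici] using h)]
    _ = ENNReal.ofReal 0.15 * itemMeasure (Set.Ici p)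
          + ENNReal.ofReal 0.85 * itemMeasure (Set.Ici (p + 2)) := by
        rw [lintegral_add_left ((measurable_one.indicator measurableSet_Ici).const_mul _)]
        rw [lintegral_const_mul _ (measurable_one.indicator measurableSet_Ici),
          lintegral_const_mul _ (measurable_one.indicator measurableSet_Ici)]
        rw [lintegral_indicator_one measurableSet_Ici, lintegral_indicator_one measurableSet_Ici]


lemma toReal_comb (a b : ℝ) (ha : 0 ≤ a) (hb : 0 ≤ b) :
    (ENNReal.ofReal 0.15 * ENNReal.ofReal a + ENNReal.ofReal 0.85 * ENNReal.ofReal b).toReal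
      = 0.15 * a + 0.85 * b := by
  rw [← ENNReal.ofReal_mul (by norm_num), ← ENNReal.ofReal_mul (by norm_num),
    ← ENNReal.ofReal_add (by positivity) (by positivity), ENNReal.toReal_ofReal (by positivity)]

lemma posted_le (p : ℝ) (hp : 0 ≤ p) :
    p * (jointMeasure {t : ℝ × ℝ | t.2 ≤ t.1 - p}).toReal ≤ 13 / 15 := by
  rw [joint_set, item_Ici, item_Ici]
  have hA0 : (0:ℝ) ≤ if p ≤ 2 then 1 else if p ≤ 5 then 1/(p-1) else 0 := by
    split_ifs with h1 h2
    · norm_num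
    · have : (0:ℝ) < p - 1 := by push_neg at h1; linarith
      positivity
    · exact le_refl 0
  have hB0 : (0:ℝ) ≤ if p + 2 ≤ 2 then 1 else if p + 2 ≤ 5 then 1/(p+2-1) else 0 := by
    split_ifs with h1 h2
    · norm_num
    · have : (0:ℝ) < p + 2 - 1 := by linarith
      positivity
    · exact le_refl 0
  rw [toReal_comb _ _ hA0 hB0]
  rcases le_or_gt p 2 with h2 | h2
  · rw [if_pos h2]
    have hBv : (if p + 2 ≤ 2 then (1:ℝ) else if p + 2 ≤ 5 then 1/(p+2-1) else 0) = 1/(p+1) := by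
      split_ifs with h1 h3
      · have hpz : p = 0 := le_antisymm (by linarith) hp
        rw [hpz]; norm_num
      · rw [show p + 2 - 1 = p + 1 by ring]
      · exact absurd (by linarith : p + 2 ≤ 5) h3
    rw [hBv]
    have h1 : (0:ℝ) < p + 1 := by linarith
    have he : 0.15 * 1 + 0.85 * (1/(p+1)) = (0.15*(p+1) + 0.85)/(p+1) := by
      field_simp
    rw [he, mul_div_assoc', div_le_iff₀ h1]
    nlinarith [mul_nonneg (by linarith : (0:ℝ) ≤ 2 - p) (by linarith : (0:ℝ) ≤ 9*p + 26)]
  · rw [if_neg (not_le.mpr h2), if_neg (show ¬ p + 2 ≤ 2 by intro h; linarith)]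
    have hp1 : (0:ℝ) < p - 1 := by linarith
    rcases le_or_gt p 3 with h3 | h3
    · rw [if_pos (by linarith : p ≤ 5), if_pos (by linarith : p + 2 ≤ 5),
        show p + 2 - 1 = p + 1 by ring]
      have hp2 : (0:ℝ) < p + 1 := by linarith
      have he : 0.15 * (1/(p-1)) + 0.85 * (1/(p+1))
          = (0.15*(p+1) + 0.85*(p-1))/((p-1)*(p+1)) := by
        field_simp
      rw [he, mul_div_assoc', div_le_iff₀ (by positivity)]
      nlinarith [mul_nonneg (by linarith : (0:ℝ) ≤ p - 2) (by linarith : (0:ℝ) ≤ 13 - 4*p)]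
    · rw [if_neg (by intro h; linarith : ¬ p + 2 ≤ 5)]
      rcases le_or_gt p 5 with h5 | h5
      · rw [if_pos h5]
        have he : 0.15 * (1/(p-1)) + 0.85 * 0 = 0.15/(p-1) := by ring
        rw [he, mul_div_assoc', div_le_iff₀ hp1]
        nlinarith
      · rw [if_neg (not_le.mpr h5)]
        norm_num

lemma pay0 (v : ℝ) : menuPay (v, 0) = if 5 ≤ v then 3 else if 2 ≤ v then 4/3 else 0 := by
  show (if (2/3)*v - 4/3 ≤ v - 3 ∧ (0:ℝ) ≤ v - 3 then (3:ℝ)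
      else if (0:ℝ) ≤ (2/3)*v - 4/3 then 4/3 else 0) = _
  by_cases h5 : (5:ℝ) ≤ v
  · rw [if_pos ⟨by linarith, by linarith⟩, if_pos h5]
  · rw [if_neg (fun hc => h5 (by linarith [hc.1])), if_neg h5]
    by_cases h2 : (2:ℝ) ≤ v
    · rw [if_pos (by linarith), if_pos h2]
    · rw [if_neg (fun hc => h2 (by linarith)), if_neg h2]

lemma pay2 (v : ℝ) : menuPay (v, 2) = if 5 ≤ v then 3 else 0 := by
  show (if (2/3)*v - 4/3 ≤ v - 3 ∧ (2:ℝ) ≤ v - 3 then (3:ℝ)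
      else if (2:ℝ) ≤ (2/3)*v - 4/3 then 4/3 else 0) = _
  by_cases h5 : (5:ℝ) ≤ v
  · rw [if_pos ⟨by linarith, by linarith⟩, if_pos h5]
  · rw [if_neg (fun hc => h5 (by linarith [hc.1])), if_neg (fun hc => h5 (by linarith)),
      if_neg h5]

lemma menu_val : (∫ t, menuPay t ∂jointMeasure) = 9 / 10 := by
  have m1 : MeasurableSet {t : ℝ × ℝ | (2/3)*t.1 - 4/3 ≤ t.1 - 3 ∧ t.2 ≤ t.1 - 3} := by
    have he : {t : ℝ × ℝ | (2/3)*t.1 - 4/3 ≤ t.1 - 3 ∧ t.2 ≤ t.1 - 3}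
        = {t : ℝ × ℝ | (2/3)*t.1 - 4/3 ≤ t.1 - 3} ∩ {t : ℝ × ℝ | t.2 ≤ t.1 - 3} := rfl
    rw [he]
    exact (measurableSet_le (by fun_prop) (by fun_prop)).inter
      (measurableSet_le (by fun_prop) (by fun_prop))
  have m2 : MeasurableSet {t : ℝ × ℝ | t.2 ≤ (2/3)*t.1 - 4/3} :=
    measurableSet_le (by fun_prop) (by fun_prop)
  have hm : Measurable menuPay := by
    unfold menuPay
    exact Measurable.ite m1 measurable_const
      (Measurable.ite m2 measurable_const measurable_const)
  have hnn : 0 ≤ᵐ[jointMeasure] menuPay :=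
    Filter.Eventually.of_forall (fun t => by unfold menuPay; split_ifs <;> norm_num)
  rw [integral_eq_lintegral_of_nonneg_ae hnn hm.aestronglyMeasurable]
  have key : ∫⁻ t, ENNReal.ofReal (menuPay t) ∂jointMeasure = ENNReal.ofReal (9/10) := by
    rw [jointMeasure, lintegral_prod _ hm.ennreal_ofReal.aemeasurable]
    have inner : ∀ v : ℝ, (∫⁻ c, ENNReal.ofReal (menuPay (v, c)) ∂outsideMeasure)
        = ENNReal.ofReal 0.15 * ENNReal.ofReal (menuPay (v, 0))
          + ENNReal.ofReal 0.85 * ENNReal.ofReal (menuPay (v, 2)) := by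
      intro v
      rw [outsideMeasure, lintegral_add_measure, lintegral_smul_measure, lintegral_smul_measure,
        lintegral_dirac, lintegral_dirac]
      simp only [smul_eq_mul]
    rw [lintegral_congr (μ := itemMeasure) inner]
    rw [itemMeasure, lintegral_add_measure, lintegral_smul_measure, lintegral_dirac]
    have hD : Measurable (fun v : ℝ =>
        ENNReal.ofReal (if v ∈ Set.Ico (2:ℝ) 5 then ((v - 1) ^ 2)⁻¹ else 0)) := by
      apply Measurable.ennreal_ofReal
      exact Measurable.ite measurableSet_Ico (by fun_prop) measurable_const
    have hg : Measurable (fun v : ℝ => ENNReal.ofReal 0.15 * ENNReal.ofReal (menuPay (v, 0))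
        + ENNReal.ofReal 0.85 * ENNReal.ofReal (menuPay (v, 2))) := by
      refine Measurable.add (f := fun v : ℝ => ENNReal.ofReal 0.15 * ENNReal.ofReal (menuPay (v, 0)))
        (g := fun v : ℝ => ENNReal.ofReal 0.85 * ENNReal.ofReal (menuPay (v, 2))) ?_ ?_
      · exact ((hm.comp (measurable_id.prodMk measurable_const)).ennreal_ofReal).const_mul _
      · exact ((hm.comp (measurable_id.prodMk measurable_const)).ennreal_ofReal).const_mul _
    rw [lintegral_withDensity_eq_lintegral_mul volume hD hg]
    have hptw : ∀ v : ℝ, ((fun v : ℝ =>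
          ENNReal.ofReal (if v ∈ Set.Ico (2:ℝ) 5 then ((v - 1) ^ 2)⁻¹ else 0))
        * (fun v : ℝ => ENNReal.ofReal 0.15 * ENNReal.ofReal (menuPay (v, 0))
          + ENNReal.ofReal 0.85 * ENNReal.ofReal (menuPay (v, 2)))) v
        = (Set.Ico (2:ℝ) 5).indicator
            (fun v => ENNReal.ofReal (((v - 1) ^ 2)⁻¹) * ENNReal.ofReal (1/5)) v := by
      intro v
      simp only [Pi.mul_apply]
      by_cases h : v ∈ Set.Ico (2:ℝ) 5
      · rw [Set.indicator_of_mem h, if_pos h, pay0 v, pay2 v, if_neg (not_le.mpr h.2),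
          if_pos h.1, if_neg (not_le.mpr h.2)]
        rw [ENNReal.ofReal_zero, mul_zero, add_zero, ← ENNReal.ofReal_mul (by norm_num)]
        norm_num
      · rw [Set.indicator_of_notMem h, if_neg h, ENNReal.ofReal_zero, zero_mul]
    rw [lintegral_congr (μ := volume) hptw]
    rw [lintegral_indicator measurableSet_Ico]
    rw [lintegral_mul_const _ (Measurable.ennreal_ofReal (by fun_prop))]
    rw [lintIco 2 le_rfl (by norm_num)]
    rw [pay0 5, pay2 5, if_pos (le_refl (5:ℝ)), if_pos (le_refl (5:ℝ))]
    rw [← ENNReal.ofReal_mul (by norm_num), ← ENNReal.ofReal_mul (by norm_num),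
      ← ENNReal.ofReal_mul (by norm_num), ← ENNReal.ofReal_add (by norm_num) (by norm_num),
      smul_eq_mul, ← ENNReal.ofReal_mul (by norm_num), ← ENNReal.ofReal_add (by norm_num) (by norm_num)]
    norm_num
  rw [key, ENNReal.toReal_ofReal (by norm_num)]

/-- For the above distribution: (a) every posted price `p ≥ 0` (which
sells iff `v − p ≥ c`) earns at most `13/15`; (b) the menu mechanism offering the item at
price `3` or with probability `2/3` at price `4/3` earns exactly `9/10`.  Hence lotteries
strictly beat every posted price, and the gap is `27/26 > 1.038`. -/
theorem lottery_strictly_beats_posted_price :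
    (∀ p : ℝ, 0 ≤ p →
      p * (jointMeasure {t : ℝ × ℝ | t.2 ≤ t.1 - p}).toReal ≤ 13 / 15) ∧
    (∫ t, menuPay t ∂jointMeasure) = 9 / 10 ∧
    (13 / 15 : ℝ) * (27 / 26) = 9 / 10 ∧ (1.038 : ℝ) < 27 / 26 := by
  exact ⟨posted_le, menu_val, by norm_num, by norm_num⟩
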